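/- Let F ⊆ ℝ² be a fractal square with base n ≥ 2 and digit set D ⊆ {0,1,…,n−1}², #D ≥ 2 (so F = ⋃_{d∈D}(F+d)/n). Define F₀ = [0,1]² and F_k = (F_{k−1} + D)/n for k ≥ 1, and set H = F + ℤ². If N ≥ 1 and γ ⊆ ℝ² is any set contained in the interior of F_N and disjoint from F, then n^N·γ ⊆ ℝ² \ H. (In the paper this is stated for γ an open arc contained in the interior of F_N \ F.) -/

import Mathlib

/-!
Let `x ∈ γ` with `n^N x = f + z`, `f ∈ F ⊆ [0,1]²`, `z ∈ ℤ²`. Then `n^N x` lies in the closed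
square `z + [0,1]²`, and since `x` is interior to `F_N`, some nearby `y ∈ F_N` has `n^N y` in the
open square `z + (0,1)²`. Open grid squares are disjoint, so `z + [0,1]²` must be one of the tiles
making up `n^N F_N`; the matching copy `(F + z)/n^N` of `F` then lies in `F`, whence
`x = (f + z)/n^N ∈ F`, contradicting `γ ∩ F = ∅`.
-/

open Pointwise Set

noncomputable def digitMap (n : ℕ) (d : ℕ × ℕ) (x : ℝ × ℝ) : ℝ × ℝ :=
  (n : ℝ)⁻¹ • (x + ((d.1 : ℝ), (d.2 : ℝ)))

lemma mul_fst_digitMap {n : ℕ} (hn : n ≠ 0) (d : ℕ × ℕ) (x : ℝ × ℝ) :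
    n * (digitMap n d x).1 = x.1 + d.1 := by
  simp [digitMap, ← mul_add, hn]

lemma mul_snd_digitMap {n : ℕ} (hn : n ≠ 0) (d : ℕ × ℕ) (x : ℝ × ℝ) :
    n * (digitMap n d x).2 = x.2 + d.2 := by
  simp [digitMap, ← mul_add, hn]

lemma subset_Icc_zero_one_of_forall_mul_eq_add {c : ℝ} (hc : 1 < c) {K : Set ℝ}
    (hK : IsCompact K) (hself : ∀ m ∈ K, ∃ x ∈ K, ∃ d, 0 ≤ d ∧ d ≤ c - 1 ∧ c * m = x + d) :
    K ⊆ Icc 0 1 := by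
  intro m hm
  obtain ⟨lo, hloK, hlo⟩ := hK.exists_isLeast ⟨m, hm⟩
  obtain ⟨hi, hhiK, hhi⟩ := hK.exists_isGreatest ⟨m, hm⟩
  have hlo_nonneg : 0 ≤ lo := by
    obtain ⟨x, hx, d, hd, -, he⟩ := hself lo hloK
    nlinarith [hlo hx]
  have hhi_le_one : hi ≤ 1 := by
    obtain ⟨x, hx, d, -, hd, he⟩ := hself hi hhiK
    nlinarith [hhi hx]
  exact ⟨hlo_nonneg.trans (hlo hm), (hhi hm).trans hhi_le_one⟩

lemma subset_unitSquare_of_subset_iUnion_digitMap {n : ℕ} (hn : 2 ≤ n) {D : Finset (ℕ × ℕ)}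
    (hD : ∀ d ∈ D, d.1 < n ∧ d.2 < n) {F : Set (ℝ × ℝ)} (hFc : IsCompact F)
    (hF : F ⊆ ⋃ d ∈ D, digitMap n d '' F) : F ⊆ Icc 0 1 ×ˢ Icc 0 1 := by
  have hn0 : n ≠ 0 := by omega
  have hn1 : (1 : ℝ) < n := by exact_mod_cast hn
  have hdigit : ∀ d ∈ D, (d.1 : ℝ) ≤ n - 1 ∧ (d.2 : ℝ) ≤ n - 1 := fun d hd => by
    have h1 : (d.1 : ℝ) + 1 ≤ n := by exact_mod_cast (hD d hd).1
    have h2 : (d.2 : ℝ) + 1 ≤ n := by exact_mod_cast (hD d hd).2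
    constructor <;> linarith
  have hfst := subset_Icc_zero_one_of_forall_mul_eq_add hn1 (hFc.image continuous_fst) <| by
    rintro _ ⟨p, hp, rfl⟩
    obtain ⟨d, hd, x, hx, rfl⟩ : ∃ d ∈ D, ∃ x ∈ F, digitMap n d x = p := by simpa using hF hp
    exact ⟨x.1, mem_image_of_mem _ hx, d.1, by positivity, (hdigit d hd).1,
      mul_fst_digitMap hn0 d x⟩
  have hsnd := subset_Icc_zero_one_of_forall_mul_eq_add hn1 (hFc.image continuous_snd) <| by
    rintro _ ⟨p, hp, rfl⟩
    obtain ⟨d, hd, x, hx, rfl⟩ : ∃ d ∈ D, ∃ x ∈ F, digitMap n d x = p := by simpa using hF hp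
    exact ⟨x.2, mem_image_of_mem _ hx, d.2, by positivity, (hdigit d hd).2,
      mul_snd_digitMap hn0 d x⟩
  exact fun p hp => ⟨hfst (mem_image_of_mem _ hp), hsnd (mem_image_of_mem _ hp)⟩

lemma exists_smul_sub_mem_of_mem_interior {E : Type*} [AddCommGroup E] [Module ℝ E]
    [TopologicalSpace E] [IsTopologicalAddGroup E] [ContinuousConstSMul ℝ E]
    {S A : Set E} {c : ℝ} (hc : c ≠ 0) (z : E) {x : E} (hx : x ∈ interior S)
    (hxA : c • x - z ∈ closure A) : ∃ y ∈ S, c • y - z ∈ A := by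
  have hopen : IsOpenMap fun y : E => c • y - z :=
    (isOpenMap_sub_right z).comp (isOpenMap_smul₀ hc)
  obtain ⟨_, ⟨y, hy, rfl⟩, hyA⟩ :=
    mem_closure_iff.1 hxA _ (hopen _ isOpen_interior) (mem_image_of_mem _ hx)
  exact ⟨y, interior_subset hy, hyA⟩

lemma Int.eq_zero_of_sub_mem_Ioo {a : ℝ} (ha : a ∈ Icc 0 1) {k : ℤ} (hk : a - k ∈ Ioo 0 1) :
    k = 0 := by
  have hlt : (k : ℝ) < 1 := by linarith [ha.2, hk.1]
  have hgt : (-1 : ℝ) < k := by linarith [ha.1, hk.2]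
  have : k < 1 ∧ -1 < k := ⟨by exact_mod_cast hlt, by exact_mod_cast hgt⟩
  omega

lemma inv_pow_smul_add_mem_of_mem_level {n : ℕ} (hn : n ≠ 0) {D : Finset (ℕ × ℕ)} {F : Set (ℝ × ℝ)}
    (hF : ⋃ d ∈ D, digitMap n d '' F ⊆ F) {Fk : ℕ → Set (ℝ × ℝ)}
    (hF0 : Fk 0 ⊆ Icc 0 1 ×ˢ Icc 0 1)
    (hFk : ∀ k, Fk (k + 1) ⊆ ⋃ d ∈ D, digitMap n d '' Fk k) (N : ℕ) {y : ℝ × ℝ} (hy : y ∈ Fk N)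
    {z : ℤ × ℤ} (hyz : (n : ℝ) ^ N • y - ((z.1 : ℝ), (z.2 : ℝ)) ∈ Ioo 0 1 ×ˢ Ioo 0 1)
    {f : ℝ × ℝ} (hf : f ∈ F) : ((n : ℝ) ^ N)⁻¹ • (f + ((z.1 : ℝ), (z.2 : ℝ))) ∈ F := by
  induction N generalizing y z with
  | zero =>
    have hz1 := Int.eq_zero_of_sub_mem_Ioo (hF0 hy).1 (by simpa using hyz.1)
    have hz2 := Int.eq_zero_of_sub_mem_Ioo (hF0 hy).2 (by simpa using hyz.2)
    simpa [hz1, hz2, Prod.mk_zero_zero] using hf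
  | succ N ih =>
    obtain ⟨d, hd, y, hyN, rfl⟩ : ∃ d ∈ D, ∃ x ∈ Fk N, digitMap n d x = _ := by
      simpa using hFk N hy
    set z' : ℤ × ℤ := (z.1 - d.1 * n ^ N, z.2 - d.2 * n ^ N)
    have hshift : (n : ℝ) ^ N • y - ((z'.1 : ℝ), (z'.2 : ℝ)) =
        (n : ℝ) ^ (N + 1) • digitMap n d y - ((z.1 : ℝ), (z.2 : ℝ)) := by
      ext <;> simp [z', digitMap] <;> field_simp <;> ring
    have htile : ((n : ℝ) ^ (N + 1))⁻¹ • (f + ((z.1 : ℝ), (z.2 : ℝ))) =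
        digitMap n d (((n : ℝ) ^ N)⁻¹ • (f + ((z'.1 : ℝ), (z'.2 : ℝ)))) := by
      ext <;> simp [z', digitMap] <;> field_simp <;> ring
    rw [htile]
    exact hF (mem_biUnion hd (mem_image_of_mem _ (ih hyN (hshift ▸ hyz))))

theorem fractalSquare_scaled_arc_in_complement
    (n : ℕ) (hn : 2 ≤ n) (D : Finset (ℕ × ℕ))
    (hD : ∀ d ∈ D, d.1 < n ∧ d.2 < n)
    (F : Set (ℝ × ℝ)) (hFc : IsCompact F)
    (hF : F = ⋃ d ∈ D, (fun x : ℝ × ℝ => ((n : ℝ))⁻¹ • (x + ((d.1 : ℝ), (d.2 : ℝ)))) '' F)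
    (Fk : ℕ → Set (ℝ × ℝ))
    (hF0 : Fk 0 = Set.Icc ((0, 0) : ℝ × ℝ) (1, 1))
    (hFk : ∀ k : ℕ,
      Fk (k + 1) = ⋃ d ∈ D, (fun x : ℝ × ℝ => ((n : ℝ))⁻¹ • (x + ((d.1 : ℝ), (d.2 : ℝ)))) '' Fk k)
    (H : Set (ℝ × ℝ))
    (hH : H = {p : ℝ × ℝ | ∃ x ∈ F, ∃ z : ℤ × ℤ, p = x + ((z.1 : ℝ), (z.2 : ℝ))})
    (N : ℕ)
    (γ : Set (ℝ × ℝ)) (hγ₁ : γ ⊆ interior (Fk N)) (hγ₂ : γ ∩ F = ∅) :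
    ((n : ℝ) ^ N) • γ ⊆ Hᶜ := by
  rintro _ ⟨x, hxγ, rfl⟩ hxH
  rw [hH] at hxH
  obtain ⟨f, hf, z, hxf : (n : ℝ) ^ N • x = f + ((z.1 : ℝ), (z.2 : ℝ))⟩ := hxH
  have hc : (n : ℝ) ^ N ≠ 0 := by positivity
  have hfQ : f ∈ Icc 0 1 ×ˢ Icc 0 1 :=
    subset_unitSquare_of_subset_iUnion_digitMap hn hD hFc hF.le hf
  obtain ⟨y, hy, hyz⟩ := exists_smul_sub_mem_of_mem_interior (A := Ioo 0 1 ×ˢ Ioo 0 1) hc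
    ((z.1 : ℝ), (z.2 : ℝ)) (hγ₁ hxγ)
    (by rwa [closure_prod_eq, closure_Ioo zero_ne_one, hxf, add_sub_cancel_right])
  have hxF : x ∈ F := by
    have hF0' : Fk 0 ⊆ Icc 0 1 ×ˢ Icc 0 1 := (hF0.trans (Icc_prod_Icc 0 1 0 1).symm).le
    have := inv_pow_smul_add_mem_of_mem_level (by omega) hF.ge hF0' (fun k => (hFk k).le) N hy hyz hf
    rwa [← hxf, smul_smul, inv_mul_cancel₀ hc, one_smul] at this
  exact hγ₂.subset ⟨hxγ, hxF⟩
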